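/- arXiv:1412.1326 — 2 statements merged into one kernel-verified Lean document; each statement's English description precedes it below -/
import Mathlib

section
/- Let N be a nilpotent group of nilpotency class c₀ with generating set B. Then for each 1 ≤ s ≤ c₀, the s-th term N_s of the lower central series of N is generated by the union of the sets of basic commutators C_k(B) for s ≤ k ≤ c₀, where C₀(B) = B and C_k(B) = {[g, b] : g ∈ C_{k-1}(B), b ∈ B}. -/
/-!
Let `K_s` be the subgroup generated by the basic commutators of weight at least `s`; since
`C_k(B) ⊆ γ_k`, we have `K_s ≤ γ_s`. Conversely `⁅K_s, N⁆ ≤ K_{s+1}`, by downward induction on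
`s` starting from `K_{c₀} ≤ γ_{c₀} = 1`: the case `s + 1` makes `K_{s+1}` normal, and then it is
enough that `⁅x, b⁆ ∈ C_{k+1}(B)` for `x ∈ C_k(B)`, `b ∈ B`. Hence `γ_s ≤ K_s` by induction on
`s`. Finally commutators of weight above `c₀` are trivial, so the weights can be cut off at `c₀`.
-/

open scoped commutatorElement

/-- The set of basic commutators of weight `k` built from a generating set `B`:
`C₀(B) = B` and `C_{k+1}(B) = {[g, b] : g ∈ C_k(B), b ∈ B}`. -/
def commSet {G : Type*} [Group G] (B : Set G) : ℕ → Set G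
  | 0 => B
  | (k + 1) => {x | ∃ g ∈ commSet B k, ∃ b ∈ B, x = ⁅g, b⁆}

theorem Subgroup.commutator_closure_le {G : Type*} [Group G] {H : Subgroup G} [H.Normal]
    {S T : Set G} (h : ∀ x ∈ S, ∀ y ∈ T, ⁅x, y⁆ ∈ H) :
    ⁅Subgroup.closure S, Subgroup.closure T⁆ ≤ H := by
  set π := QuotientGroup.mk' H
  have hcomm : π '' S ⊆ Subgroup.centralizer (π '' T) := by
    rintro _ ⟨x, hx, rfl⟩ _ ⟨y, hy, rfl⟩
    rw [eq_comm, ← commutatorElement_eq_one_iff_mul_comm, ← map_commutatorElement,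
      QuotientGroup.mk'_apply, QuotientGroup.eq_one_iff]
    exact h x hx y hy
  rw [← QuotientGroup.ker_mk' H, ← Subgroup.map_eq_bot_iff, Subgroup.map_commutator,
    MonoidHom.map_closure, MonoidHom.map_closure, Subgroup.commutator_eq_bot_iff_le_centralizer,
    Subgroup.centralizer_closure]
  exact (Subgroup.closure_le _).2 hcomm

section commSet

variable {G : Type*} [Group G] (B : Set G)

theorem commSet_subset_lowerCentralSeries :
    ∀ k, commSet B k ⊆ ((⊤ : Subgroup G).lowerCentralSeries k : Set G)
  | 0 => fun x _ => Subgroup.mem_top x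
  | k + 1 => by
    rintro _ ⟨g, hg, b, -, rfl⟩
    exact Subgroup.commutator_mem_commutator (commSet_subset_lowerCentralSeries k hg)
      (Subgroup.mem_top b)

def commClosureFrom (s : ℕ) : Subgroup G :=
  Subgroup.closure (⋃ k ∈ Set.Ici s, commSet B k)

theorem commSet_subset_commClosureFrom {s k : ℕ} (h : s ≤ k) :
    commSet B k ⊆ commClosureFrom B s :=
  fun _ hx => Subgroup.subset_closure (Set.mem_biUnion h hx)

theorem commClosureFrom_antitone : Antitone (commClosureFrom B) := fun _ _ h =>
  Subgroup.closure_mono (Set.biUnion_subset_biUnion_left fun _ hk => le_trans h hk)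

theorem commClosureFrom_le_lowerCentralSeries (s : ℕ) :
    commClosureFrom B s ≤ (⊤ : Subgroup G).lowerCentralSeries s :=
  (Subgroup.closure_le _).2 <| Set.iUnion₂_subset fun k hk =>
    (commSet_subset_lowerCentralSeries B k).trans
      (Subgroup.lowerCentralSeries_antitone ⊤ hk)

variable {B} {c : ℕ}

theorem commClosureFrom_eq_bot (hbot : (⊤ : Subgroup G).lowerCentralSeries c = ⊥) {s : ℕ}
    (hs : c ≤ s) : commClosureFrom B s = ⊥ :=
  le_bot_iff.1 <| hbot ▸ (commClosureFrom_le_lowerCentralSeries B s).trans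
    (Subgroup.lowerCentralSeries_antitone ⊤ hs)

theorem commutator_commClosureFrom_top_le (hbot : (⊤ : Subgroup G).lowerCentralSeries c = ⊥)
    (hgen : Subgroup.closure B = ⊤) (s : ℕ) :
    ⁅commClosureFrom B s, ⊤⁆ ≤ commClosureFrom B (s + 1) := by
  induction s using Nat.strong_decreasing_induction with
  | base =>
    refine ⟨c, fun s hs => ?_⟩
    rw [commClosureFrom_eq_bot hbot hs.le, Subgroup.commutator_bot_left]
    exact bot_le
  | step s ih =>
    have : (commClosureFrom B (s + 1)).Normal :=
      Subgroup.commutator_top_right_le_iff.1 <|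
        (ih (s + 1) s.lt_succ_self).trans (commClosureFrom_antitone B (s + 1).le_succ)
    rw [← hgen]
    refine Subgroup.commutator_closure_le fun x hx b hb => ?_
    obtain ⟨k, hk, hxk⟩ := Set.mem_iUnion₂.1 hx
    exact commSet_subset_commClosureFrom B (Nat.succ_le_succ hk) ⟨x, hxk, b, hb, rfl⟩

theorem lowerCentralSeries_eq_commClosureFrom (hbot : (⊤ : Subgroup G).lowerCentralSeries c = ⊥)
    (hgen : Subgroup.closure B = ⊤) (s : ℕ) :
    (⊤ : Subgroup G).lowerCentralSeries s = commClosureFrom B s := by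
  refine le_antisymm ?_ (commClosureFrom_le_lowerCentralSeries B s)
  induction s with
  | zero =>
    show ⊤ ≤ _
    rw [← hgen]
    exact (Subgroup.closure_le _).2 (commSet_subset_commClosureFrom B (le_refl 0))
  | succ s ih =>
    exact (Subgroup.commutator_mono ih le_rfl).trans
      (commutator_commClosureFrom_top_le hbot hgen s)

theorem commClosureFrom_eq_closure_iUnion_Icc
    (hbot : (⊤ : Subgroup G).lowerCentralSeries c = ⊥) (s : ℕ) :
    commClosureFrom B s = Subgroup.closure (⋃ k ∈ Set.Icc s c, commSet B k) := by
  refine le_antisymm ((Subgroup.closure_le _).2 <| Set.iUnion₂_subset fun k hk x hx => ?_)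
    (Subgroup.closure_mono <| Set.biUnion_subset_biUnion_left fun _ hk => hk.1)
  by_cases hkc : k ≤ c
  · exact Subgroup.subset_closure (Set.mem_biUnion ⟨hk, hkc⟩ hx)
  · have hx1 : x = 1 := by
      simpa [commClosureFrom_eq_bot hbot (not_le.1 hkc).le] using
        commSet_subset_commClosureFrom B le_rfl hx
    exact hx1 ▸ one_mem _

end commSet

/-- If `N` is a nilpotent group of nilpotency class `c₀` generated by `B`, then for each
`1 ≤ s ≤ c₀` the `s`-th term of the lower central series of `N` is generated by
`⋃_{k=s}^{c₀} C_k(B)`. -/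
theorem lowerCentralSeries_eq_closure_iUnion_commSet {N : Type*} [Group N]
    [Group.IsNilpotent N] (c₀ : ℕ) (hc : Group.nilpotencyClass N = c₀)
    (B : Set N) (hgen : Subgroup.closure B = ⊤) :
    ∀ s : ℕ, 1 ≤ s → s ≤ c₀ →
      (⊤ : Subgroup N).lowerCentralSeries s = Subgroup.closure (⋃ k ∈ Set.Icc s c₀, commSet B k) := by
  have hbot : (⊤ : Subgroup N).lowerCentralSeries c₀ = ⊥ :=
    hc ▸ Subgroup.lowerCentralSeries_nilpotencyClass
  intro s _ _
  rw [lowerCentralSeries_eq_commClosureFrom hbot hgen,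
    commClosureFrom_eq_closure_iUnion_Icc hbot]
end

section
/- Let (X, d) be a noncompact, complete, locally compact length space. Suppose X is C-homogeneous for some constant C < ∞, i.e. for all x, y ∈ X there exists an isometry f of X with d(y, f(x)) ≤ C. Then X contains a line, i.e. an isometric embedding γ : ℝ → X. -/
/-!
Approximate midpoints give, for every `ε > 0`, a chain of points from `x` to `z` with steps at
most `ε` and total length at most `d(x, z) + ε`; read at the right indices, such a chain is an
`ε`-almost isometric copy of the interval `[0, d(x, z)]`. The same chains show that a closed
ball of radius `r + s` lies in the closed `s`-neighbourhood of the ball of radius `r`, which is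
what a Hopf–Rinow continuity argument needs to prove that `X` is proper. Hence noncompactness
gives almost isometric copies of arbitrarily long intervals; isometries move their midpoints to
within `C` of a fixed point, and a pointwise ultrafilter limit, which exists by properness,
is a line.
-/

open Metric Filter Topology Set

/-- A metric space is a length space if any two points admit approximate midpoints.
(For complete spaces this is equivalent to the usual definition via path lengths.) -/
def IsLengthSpace (X : Type*) [MetricSpace X] : Prop :=
  ∀ x y : X, ∀ ε : ℝ, 0 < ε →
    ∃ m : X, dist x m ≤ dist x y / 2 + ε ∧ dist m y ≤ dist x y / 2 + ε

theorem Nat.floor_div_mul_le_and_lt {t b : ℝ} (ht : 0 ≤ t) (hb : 0 < b) :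
    (⌊t / b⌋₊ : ℝ) * b ≤ t ∧ t < (⌊t / b⌋₊ : ℝ) * b + b := by
  constructor
  · exact (le_div_iff₀ hb).1 (Nat.floor_le (div_nonneg ht hb.le))
  · have := (div_lt_iff₀ hb).1 (Nat.lt_floor_add_one (t / b))
    linarith

section Chain

variable {X : Type*} [PseudoMetricSpace X] {c : ℕ → X} {N : ℕ} {b : ℝ}

theorem dist_le_mul_of_dist_succ_le (hc : ∀ k < N, dist (c k) (c (k + 1)) ≤ b) {i j : ℕ}
    (hij : i ≤ j) (hjN : j ≤ N) : dist (c i) (c j) ≤ ((j : ℝ) - i) * b := by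
  calc dist (c i) (c j) ≤ ∑ _k ∈ Finset.Ico i j, b :=
        dist_le_Ico_sum_of_dist_le hij fun _ hk => hc _ (hk.trans_le hjN)
    _ = ((j : ℝ) - i) * b := by simp [Nat.cast_sub hij]

theorem abs_dist_sub_mul_le_of_dist_succ_le (hc : ∀ k < N, dist (c k) (c (k + 1)) ≤ b)
    {i j : ℕ} (hi : i ≤ N) (hj : j ≤ N) :
    |dist (c i) (c j) - |(i : ℝ) - j| * b| ≤ N * b - dist (c 0) (c N) := by
  wlog hij : i ≤ j generalizing i j
  · rw [dist_comm, abs_sub_comm (i : ℝ)]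
    exact this hj hi (le_of_not_ge hij)
  have hij' : (i : ℝ) ≤ j := by exact_mod_cast hij
  have h0i := dist_le_mul_of_dist_succ_le hc (Nat.zero_le i) hi
  have hupper := dist_le_mul_of_dist_succ_le hc hij hj
  have hjN := dist_le_mul_of_dist_succ_le hc hj le_rfl
  have htri := dist_triangle4 (c 0) (c i) (c j) (c N)
  rw [abs_sub_comm (i : ℝ) j, abs_of_nonneg (sub_nonneg.2 hij'), abs_le]
  push_cast at h0i
  constructor <;> nlinarith

end Chain

theorem totallyBounded_of_forall_subset_thickening {α : Type*} [PseudoMetricSpace α] {s : Set α}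
    (h : ∀ ε > 0, ∃ t, TotallyBounded t ∧ s ⊆ thickening ε t) : TotallyBounded s := by
  refine Metric.totallyBounded_iff.2 fun ε hε => ?_
  obtain ⟨t, ht, hst⟩ := h (ε / 2) (half_pos hε)
  obtain ⟨F, hF, htF⟩ := Metric.totallyBounded_iff.1 ht (ε / 2) (half_pos hε)
  refine ⟨F, hF, fun z hz => ?_⟩
  obtain ⟨w, hw, hzw⟩ := mem_thickening_iff.1 (hst hz)
  obtain ⟨y, hy, hwy⟩ := mem_iUnion₂.1 (htF hw)
  rw [mem_ball] at hwy
  exact mem_iUnion₂.2 ⟨y, hy, mem_ball.2 (by linarith [dist_triangle z w y])⟩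

theorem exists_lt_dist_of_not_compactSpace {X : Type*} [PseudoMetricSpace X] [ProperSpace X]
    (h : ¬CompactSpace X) (x : X) (r : ℝ) : ∃ z, r < dist x z := by
  by_contra! H
  exact h (compactSpace_iff_isBounded_univ.2
    ((isBounded_iff_subset_closedBall x).2 ⟨r, fun z _ => mem_closedBall'.2 (H z)⟩))

theorem exists_isometry_of_tendsto_dist {ι α X : Type*} [PseudoMetricSpace α]
    [PseudoMetricSpace X] {l : Filter ι} [l.NeBot] (f : ι → α → X)
    (hK : ∀ a, ∃ K, IsCompact K ∧ ∀ᶠ i in l, f i a ∈ K)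
    (hf : ∀ a b, Tendsto (fun i => dist (f i a) (f i b)) l (𝓝 (dist a b))) :
    ∃ g : α → X, Isometry g := by
  set U := Ultrafilter.of l
  have hlim : ∀ a, ∃ x, Tendsto (fun i => f i a) U (𝓝 x) := fun a => by
    obtain ⟨K, hK, hfK⟩ := hK a
    obtain ⟨x, -, hx⟩ :=
      hK.ultrafilter_le_nhds (U.map (f · a)) (le_principal_iff.2 (Ultrafilter.of_le l hfK))
    exact ⟨x, hx⟩
  choose g hg using hlim
  exact ⟨g, .of_dist_eq fun a b =>
    tendsto_nhds_unique ((hg a).dist (hg b)) ((hf a b).mono_left (Ultrafilter.of_le l))⟩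

theorem exists_isometry_of_forall_almost_isometric {X : Type*} [PseudoMetricSpace X]
    [ProperSpace X] (x₀ : X) (C : ℝ)
    (h : ∀ L ε : ℝ, 0 < ε → ∃ g : ℝ → X, dist x₀ (g 0) ≤ C ∧
      ∀ s t, |s| ≤ L → |t| ≤ L → |dist (g s) (g t) - dist s t| ≤ ε) :
    ∃ γ : ℝ → X, Isometry γ := by
  choose g hg0 hg using fun n : ℕ => h n (1 / (n + 1)) Nat.one_div_pos_of_nat
  have hclose : ∀ s t : ℝ, ∀ᶠ n : ℕ in atTop,
      |dist (g n s) (g n t) - dist s t| ≤ 1 / (n + 1) := fun s t => by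
    filter_upwards [eventually_ge_atTop ⌈max |s| |t|⌉₊] with n hn
    have hn' : max |s| |t| ≤ n := (Nat.le_ceil _).trans (by exact_mod_cast hn)
    exact hg n s t ((le_max_left _ _).trans hn') ((le_max_right _ _).trans hn')
  refine exists_isometry_of_tendsto_dist (l := atTop) g
    (fun t => ⟨closedBall x₀ (C + |t| + 1), isCompact_closedBall _ _, ?_⟩) (fun s t => ?_)
  · filter_upwards [hclose 0 t] with n hn
    have h1 : 1 / ((n : ℝ) + 1) ≤ 1 := div_le_one_of_le₀ (by linarith [n.cast_nonneg (α := ℝ)])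
      (by positivity)
    rw [dist_comm (0 : ℝ) t, Real.dist_0_eq_abs] at hn
    rw [mem_closedBall']
    linarith [dist_triangle x₀ (g n 0) (g n t), hg0 n, (abs_le.1 hn).2]
  · rw [tendsto_iff_norm_sub_tendsto_zero]
    refine squeeze_zero' (.of_forall fun _ => norm_nonneg _) ?_
      tendsto_one_div_add_atTop_nhds_zero_nat
    simpa only [Real.norm_eq_abs] using hclose s t

namespace IsLengthSpace

variable {X : Type*} [MetricSpace X]

theorem exists_dyadic_chain (hlen : IsLengthSpace X) (n : ℕ) (x y : X) {δ : ℝ} (hδ : 0 < δ) :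
    ∃ c : ℕ → X, c 0 = x ∧ c (2 ^ n) = y ∧
      ∀ i < 2 ^ n, dist (c i) (c (i + 1)) ≤ (dist x y + δ) / 2 ^ n := by
  induction n generalizing x y δ with
  | zero =>
    refine ⟨fun i => if i = 0 then x else y, by simp, by simp, fun i hi => ?_⟩
    obtain rfl : i = 0 := by simpa using hi
    simp [hδ.le]
  | succ n ih =>
    obtain ⟨m, hxm, hmy⟩ := hlen x y (δ / 4) (by positivity)
    obtain ⟨c₁, hc₁0, hc₁N, hc₁⟩ := ih x m (δ := δ / 4) (by positivity)
    obtain ⟨c₂, hc₂0, hc₂N, hc₂⟩ := ih m y (δ := δ / 4) (by positivity)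
    have hhalf : ∀ d, d ≤ dist x y / 2 + δ / 4 →
        (d + δ / 4) / 2 ^ n ≤ (dist x y + δ) / 2 ^ (n + 1) := fun d hd => by
      rw [pow_succ, ← div_div, div_right_comm]
      gcongr
      linarith
    set c : ℕ → X := fun i => if i ≤ 2 ^ n then c₁ i else c₂ (i - 2 ^ n)
    have hc_right : ∀ i, 2 ^ n ≤ i → c i = c₂ (i - 2 ^ n) := fun i hi => by
      rcases hi.eq_or_lt with rfl | hi
      · simp [c, hc₁N, hc₂0]
      · simp [c, Nat.not_le.2 hi]
    refine ⟨c, by simp [c, hc₁0], ?_, fun i hi => ?_⟩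
    · rw [hc_right _ (Nat.pow_le_pow_right two_pos n.le_succ), pow_succ, mul_two,
        Nat.add_sub_cancel, hc₂N]
    rcases Nat.lt_or_ge i (2 ^ n) with hin | hin
    · simp only [c, if_pos hin.le, if_pos (Nat.succ_le_of_lt hin)]
      exact (hc₁ i hin).trans (hhalf _ hxm)
    · rw [hc_right i hin, hc_right (i + 1) (by omega), Nat.sub_add_comm hin]
      exact (hc₂ _ (by rw [pow_succ] at hi; omega)).trans (hhalf _ hmy)

theorem exists_chain (hlen : IsLengthSpace X) (x y : X) {ε : ℝ} (hε : 0 < ε) :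
    ∃ (N : ℕ) (b : ℝ) (c : ℕ → X), 0 < b ∧ b ≤ ε ∧ c 0 = x ∧ c N = y ∧
      N * b = dist x y + ε ∧ ∀ i < N, dist (c i) (c (i + 1)) ≤ b := by
  obtain ⟨n, hn⟩ := pow_unbounded_of_one_lt ((dist x y + ε) / ε) one_lt_two
  obtain ⟨c, hc0, hcN, hc⟩ := hlen.exists_dyadic_chain n x y hε
  refine ⟨2 ^ n, (dist x y + ε) / 2 ^ n, c, by positivity, ?_, hc0, hcN, ?_, hc⟩
  · rw [div_le_iff₀ (by positivity)]
    rw [div_lt_iff₀ hε] at hn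
    linarith
  · push_cast
    exact mul_div_cancel₀ _ (by positivity)

theorem exists_dist_le_of_le_dist (hlen : IsLengthSpace X) {x z : X} {s ε : ℝ} (hs : 0 ≤ s)
    (hsd : s ≤ dist x z) (hε : 0 < ε) :
    ∃ w, dist x w ≤ s ∧ dist w z ≤ dist x z - s + ε := by
  obtain ⟨N, b, c, hb, hbε, hc0, hcN, hNb, hc⟩ := hlen.exists_chain x z (half_pos hε)
  obtain ⟨his, hsi⟩ := Nat.floor_div_mul_le_and_lt hs hb
  set i := ⌊s / b⌋₊
  have hiN : i ≤ N := by
    have hxz := dist_le_mul_of_dist_succ_le hc (Nat.zero_le N) le_rfl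
    rw [hc0, hcN, Nat.cast_zero, sub_zero] at hxz
    exact_mod_cast le_of_mul_le_mul_right (by linarith : (i : ℝ) * b ≤ N * b) hb
  refine ⟨c i, ?_, ?_⟩
  · have h0i := dist_le_mul_of_dist_succ_le hc (Nat.zero_le i) hiN
    rw [hc0, Nat.cast_zero, sub_zero] at h0i
    linarith
  · have hiz := dist_le_mul_of_dist_succ_le hc hiN le_rfl
    rw [hcN, sub_mul, hNb] at hiz
    linarith

theorem closedBall_add_subset_cthickening (hlen : IsLengthSpace X) (x : X) {r : ℝ} (hr : 0 ≤ r)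
    (s : ℝ) : closedBall x (r + s) ⊆ cthickening s (closedBall x r) := by
  intro z hz
  rw [mem_closedBall'] at hz
  rcases le_or_gt (dist x z) r with hzr | hrz
  · exact self_subset_cthickening _ (mem_closedBall'.2 hzr)
  rw [cthickening_eq_iInter_cthickening, mem_iInter₂]
  intro ε hε
  obtain ⟨w, hxw, hwz⟩ := hlen.exists_dist_le_of_le_dist hr hrz.le (sub_pos.2 hε)
  exact mem_cthickening_of_dist_le z w ε _ (mem_closedBall'.2 hxw) (by rw [dist_comm]; linarith)

theorem exists_isCompact_closedBall_add [LocallyCompactSpace X] (hlen : IsLengthSpace X)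
    {x : X} {r : ℝ} (hr : 0 ≤ r) (hK : IsCompact (closedBall x r)) :
    ∃ δ > 0, IsCompact (closedBall x (r + δ)) := by
  obtain ⟨δ, hδ, hKδ⟩ := hK.exists_isCompact_cthickening
  exact ⟨δ, hδ, hKδ.of_isClosed_subset isClosed_closedBall
    (hlen.closedBall_add_subset_cthickening x hr δ)⟩

theorem isCompact_closedBall_of_forall_lt [CompleteSpace X] (hlen : IsLengthSpace X) {x : X}
    {r : ℝ} (h : ∀ r' < r, IsCompact (closedBall x r')) : IsCompact (closedBall x r) := by
  rcases le_or_gt r 0 with hr | hr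
  · exact isCompact_singleton.of_isClosed_subset isClosed_closedBall
      ((closedBall_subset_closedBall hr).trans (closedBall_zero (x := x)).subset)
  refine TotallyBounded.isCompact_of_isClosed
    (totallyBounded_of_forall_subset_thickening fun ε hε => ?_) isClosed_closedBall
  set r' := max 0 (r - ε / 2)
  have hr'r : r - r' < ε := by linarith [le_max_right 0 (r - ε / 2)]
  refine ⟨closedBall x r', (h r' (max_lt hr (by linarith))).totallyBounded, ?_⟩
  calc closedBall x r = closedBall x (r' + (r - r')) := by rw [add_sub_cancel]
    _ ⊆ cthickening (r - r') (closedBall x r') :=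
        hlen.closedBall_add_subset_cthickening x (le_max_left _ _) _
    _ ⊆ thickening ε (closedBall x r') := cthickening_subset_thickening' hε hr'r _

theorem properSpace [CompleteSpace X] [LocallyCompactSpace X] (hlen : IsLengthSpace X) :
    ProperSpace X := by
  rcases isEmpty_or_nonempty X with hX | ⟨⟨x⟩⟩
  · infer_instance
  refine .of_seq_closedBall (x := x) (l := atTop) tendsto_id (.of_forall fun r => ?_)
  by_contra hr
  set T := {r : ℝ | ¬IsCompact (closedBall x r)}
  have hT0 : ∀ r ∈ T, 0 ≤ r := fun r hrT => by
    by_contra! hneg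
    exact hrT ((closedBall_eq_empty (x := x)).2 hneg ▸ isCompact_empty)
  have hTne : T.Nonempty := ⟨r, hr⟩
  have hR := hlen.isCompact_closedBall_of_forall_lt fun r' hr' =>
    not_not.1 (notMem_of_lt_csInf hr' ⟨0, hT0⟩)
  obtain ⟨δ, hδ, hRδ⟩ := hlen.exists_isCompact_closedBall_add (le_csInf hTne hT0) hR
  obtain ⟨a, haT, ha⟩ := exists_lt_of_csInf_lt hTne (lt_add_of_pos_right _ hδ)
  exact haT (hRδ.of_isClosed_subset isClosed_closedBall (closedBall_subset_closedBall ha.le))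

theorem exists_almost_isometric_Icc (hlen : IsLengthSpace X) (x z : X) {ε : ℝ} (hε : 0 < ε) :
    ∃ g : ℝ → X, ∀ s ∈ Icc 0 (dist x z), ∀ t ∈ Icc 0 (dist x z),
      |dist (g s) (g t) - dist s t| ≤ ε := by
  obtain ⟨N, b, c, hb, hbε, hc0, hcN, hNb, hc⟩ := hlen.exists_chain x z (half_pos hε)
  have hxz := dist_le_mul_of_dist_succ_le hc (Nat.zero_le N) le_rfl
  rw [hc0, hcN, Nat.cast_zero, sub_zero] at hxz
  have hindex : ∀ t ∈ Icc 0 (dist x z),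
      ⌊t / b⌋₊ ≤ N ∧ (⌊t / b⌋₊ : ℝ) * b ≤ t ∧ t < (⌊t / b⌋₊ : ℝ) * b + b := fun t ht => by
    obtain ⟨hle, hlt⟩ := Nat.floor_div_mul_le_and_lt ht.1 hb
    refine ⟨?_, hle, hlt⟩
    exact_mod_cast le_of_mul_le_mul_right (by linarith [ht.2] : (⌊t / b⌋₊ : ℝ) * b ≤ N * b) hb
  refine ⟨fun t => c ⌊t / b⌋₊, fun s hs t ht => ?_⟩
  obtain ⟨hsN, hs₁, hs₂⟩ := hindex s hs
  obtain ⟨htN, ht₁, ht₂⟩ := hindex t ht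
  have hchain := abs_dist_sub_mul_le_of_dist_succ_le hc hsN htN
  rw [hc0, hcN, hNb, add_sub_cancel_left] at hchain
  have hround : |(|(⌊s / b⌋₊ : ℝ) - ⌊t / b⌋₊| * b - dist s t)| ≤ b := by
    rw [Real.dist_eq, ← abs_of_pos hb, ← abs_mul, abs_of_pos hb, sub_mul]
    refine (abs_abs_sub_abs_le_abs_sub _ _).trans (abs_le.2 ⟨?_, ?_⟩) <;> linarith
  calc |dist (c ⌊s / b⌋₊) (c ⌊t / b⌋₊) - dist s t|
      ≤ ε / 2 + b := (abs_sub_le _ _ _).trans (add_le_add hchain hround)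
    _ ≤ ε := by linarith

end IsLengthSpace

/-- **Lines in almost homogeneous length spaces.** A noncompact, complete, locally compact
length space `X` which is `C`-homogeneous (for every `x, y` there is an isometry `f` of
`X` with `d(y, f x) ≤ C`) contains a line, i.e. an isometric embedding of `ℝ`. -/
theorem exists_line_of_almost_homogeneous {X : Type*} [MetricSpace X] [CompleteSpace X]
    [LocallyCompactSpace X] (hlen : IsLengthSpace X) (hnc : ¬ CompactSpace X)
    (C : ℝ) (hC : ∀ x y : X, ∃ f : X ≃ᵢ X, dist y (f x) ≤ C) :
    ∃ γ : ℝ → X, Isometry γ := by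
  have := hlen.properSpace
  obtain ⟨x₀⟩ : Nonempty X := by
    by_contra hX
    have := not_nonempty_iff.1 hX
    exact hnc inferInstance
  refine exists_isometry_of_forall_almost_isometric x₀ C fun L ε hε => ?_
  obtain ⟨z, hz⟩ := exists_lt_dist_of_not_compactSpace hnc x₀ (2 * L)
  obtain ⟨g, hg⟩ := hlen.exists_almost_isometric_Icc x₀ z hε
  obtain ⟨f, hf⟩ := hC (g L) x₀
  have hmem : ∀ u, |u| ≤ L → u + L ∈ Icc 0 (dist x₀ z) := fun u hu => by
    constructor <;> linarith [abs_le.1 hu]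
  refine ⟨fun t => f (g (t + L)), by simpa using hf, fun s t hs ht => ?_⟩
  simpa [f.dist_eq] using hg _ (hmem s hs) _ (hmem t ht)
end
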